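/- Approaching from above for the perturbed two-layer dynamics: assume z ≥ 0, let t₀ ≥ 0, suppose |h(t)| ≤ κ for all t ≥ t₀ for some κ > 0, and suppose θ(t₀) ≥ z. Then |z − θ(t)| ≤ 2·max(z, 2κ) for all t ≥ t₀ + (max(z, 2κ))⁻¹. -/

import Mathlib

/-!
Write `θ = aβ`. The flow conserves `a² - β² = λ`, so `θ' = (a² + β²)(z - θ + h)` with
`a² + β² ≥ max(λ, 2θ)`. With `m = max(z, 2κ)`, the level `z - 2κ` is a lower barrier for
`θ`, and `z + m` an upper one once it is reached. It is reached within time `1/m`: above it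
`u = θ - z` satisfies `u' ≤ -u²`, so `1/u` grows at unit rate and would exceed `1/m`.
-/

open Set

section Comparison

variable {f f' : ℝ → ℝ} {s r c : ℝ}

theorem le_of_hasDerivWithinAt_neg_of_eq
    (hf : ∀ x ∈ Ici s, HasDerivWithinAt f (f' x) (Ici s) x) (hsr : s ≤ r) (hr : f r ≤ c)
    (hc : ∀ x ∈ Ici r, f x = c → f' x < 0) : ∀ x ∈ Ici r, f x ≤ c := by
  intro x hx
  have hcont : ContinuousOn f (Ici s) := fun y hy => (hf y hy).continuousWithinAt
  refine image_le_of_deriv_right_lt_deriv_boundary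
    (hcont.mono (Icc_subset_Ici_self.trans (Ici_subset_Ici.2 hsr)))
    (fun y hy => (hf y (hsr.trans hy.1)).mono (Ici_subset_Ici.2 (hsr.trans hy.1))) hr
    (B' := fun _ => 0) (fun _ => hasDerivAt_const _ c) (fun y hy => hc y hy.1) ⟨hx, le_rfl⟩

theorem exists_le_of_hasDerivWithinAt_le_neg_sq {m : ℝ} (hm : 0 < m)
    (hf : ∀ x ∈ Ici s, HasDerivWithinAt f (f' x) (Ici s) x) (hsr : s ≤ r)
    (hf' : ∀ x ∈ Icc r (r + m⁻¹), m < f x → f' x ≤ -f x ^ 2) :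
    ∃ x ∈ Icc r (r + m⁻¹), f x ≤ m := by
  by_contra! hgt
  have hpos : ∀ x ∈ Icc r (r + m⁻¹), f x ≠ 0 := fun x hx => (hm.trans (hgt x hx)).ne'
  have hsub : Icc r (r + m⁻¹) ⊆ Ici s := fun y hy => hsr.trans hy.1
  have hcont : ContinuousOn f (Icc r (r + m⁻¹)) := fun y hy =>
    (hf y (hsub hy)).continuousWithinAt.mono hsub
  have hgrow : ∀ x ∈ Icc r (r + m⁻¹), (f r)⁻¹ + (x - r) ≤ (f x)⁻¹ := by
    refine image_le_of_deriv_right_le_deriv_boundary (B' := fun x => -f' x / f x ^ 2)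
      (by fun_prop) (fun x _ => ((hasDerivWithinAt_id x _).sub_const r).const_add _) (by simp)
      (hcont.inv₀ hpos) (fun x hx => ?_) (fun x hx => ?_)
    · exact ((hf x (hsr.trans hx.1)).mono (Ici_subset_Ici.2 (hsr.trans hx.1))).inv
        (hpos x (Ico_subset_Icc_self hx))
    · have hx' := Ico_subset_Icc_self hx
      rw [le_div_iff₀ (pow_pos (hm.trans (hgt x hx')) 2)]
      linarith [hf' x hx' (hgt x hx')]
  have hend : r + m⁻¹ ∈ Icc r (r + m⁻¹) := ⟨by simp [hm.le], le_rfl⟩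
  have h1 := hgrow _ hend
  have h2 : (f (r + m⁻¹))⁻¹ < m⁻¹ := inv_strictAnti₀ hm (hgt _ hend)
  have h3 : 0 < (f r)⁻¹ := inv_pos.2 (hm.trans (hgt r ⟨le_rfl, hend.1⟩))
  linarith

end Comparison

section TwoLayer

variable {a β g : ℝ → ℝ} {s : ℝ}
  (hode : ∀ t ∈ Ici s,
    HasDerivWithinAt β (a t * g t) (Ici s) t ∧ HasDerivWithinAt a (β t * g t) (Ici s) t)
include hode

theorem hasDerivWithinAt_mul_of_twoLayer {t : ℝ} (ht : t ∈ Ici s) :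
    HasDerivWithinAt (fun t => a t * β t) ((a t ^ 2 + β t ^ 2) * g t) (Ici s) t :=
  ((hode t ht).2.mul (hode t ht).1).congr_deriv (by ring)

theorem sq_sub_sq_eq_of_twoLayer {t : ℝ} (ht : t ∈ Ici s) :
    a t ^ 2 - β t ^ 2 = a s ^ 2 - β s ^ 2 := by
  have hder : ∀ x ∈ Ici s, HasDerivWithinAt (fun t => a t ^ 2 - β t ^ 2) 0 (Ici s) x :=
    fun x hx => (((hode x hx).2.pow 2).sub ((hode x hx).1.pow 2)).congr_deriv (by ring)
  refine constant_of_has_deriv_right_zero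
    (fun y hy => (hder y hy.1).continuousWithinAt.mono Icc_subset_Ici_self)
    (fun y hy => (hder y hy.1).mono (Ici_subset_Ici.2 hy.1)) t ⟨ht, le_rfl⟩

end TwoLayer

section Relaxation

variable {θ P h : ℝ → ℝ} {z κ s r c : ℝ}
  (hθ : ∀ t ∈ Ici s, HasDerivWithinAt θ (P t * (z - θ t + h t)) (Ici s) t) (hsr : s ≤ r)
  (hh : ∀ t ∈ Ici r, |h t| ≤ κ)
include hθ hsr hh

theorem le_of_relaxation_of_le (hP : ∀ t ∈ Ici r, 0 < P t) (hr : θ r ≤ c) (hc : z + κ < c) :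
    ∀ t ∈ Ici r, θ t ≤ c :=
  le_of_hasDerivWithinAt_neg_of_eq hθ hsr hr fun t ht hθc =>
    mul_neg_of_pos_of_neg (hP t ht) (by linarith [(abs_le.1 (hh t ht)).2])

theorem ge_of_relaxation_of_ge (hP : ∀ t ∈ Ici r, 0 < P t) (hr : c ≤ θ r) (hc : c < z - κ) :
    ∀ t ∈ Ici r, c ≤ θ t := by
  have key := le_of_hasDerivWithinAt_neg_of_eq (fun t ht => (hθ t ht).neg) hsr
    (neg_le_neg hr) fun t ht hθc => by
      have hθc : θ t = c := neg_inj.1 hθc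
      have : 0 < P t * (z - θ t + h t) :=
        mul_pos (hP t ht) (by linarith [(abs_le.1 (hh t ht)).1])
      linarith
  exact fun t ht => neg_le_neg_iff.1 (key t ht)

theorem exists_le_add_of_relaxation {m : ℝ} (hz : 0 ≤ z) (hm : 0 < m) (hκm : 2 * κ ≤ m)
    (hPθ : ∀ t ∈ Ici r, 2 * θ t ≤ P t) : ∃ t ∈ Icc r (r + m⁻¹), θ t ≤ z + m := by
  obtain ⟨t, ht, hle⟩ := exists_le_of_hasDerivWithinAt_le_neg_sq hm
    (fun t ht => (hθ t ht).sub_const z) hsr fun t ht hgt => by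
      have hht := (abs_le.1 (hh t ht.1)).2
      have hP := hPθ t ht.1
      -- `P (z - θ + h) ≤ 2θ (z - θ + h) ≤ 2 (θ - z) (κ - (θ - z)) ≤ -(θ - z)²`
      nlinarith [mul_le_mul_of_nonpos_right hP (by linarith : z - θ t + h t ≤ 0)]
  exact ⟨t, ht, by linarith⟩

end Relaxation

theorem stmt_3_general (lam z κ t₀ : ℝ) (h a β : ℝ → ℝ)
    (hlam : 0 < lam)
    (ha0 : a 0 = Real.sqrt lam) (hβ0 : β 0 = 0)
    (hode : ∀ t ∈ Ici (0 : ℝ),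
      HasDerivWithinAt β (a t * (z - a t * β t + h t)) (Ici 0) t ∧
      HasDerivWithinAt a (β t * (z - a t * β t + h t)) (Ici 0) t)
    (hz : 0 ≤ z) (ht₀ : 0 ≤ t₀) (hκ : 0 < κ)
    (hhb : ∀ t, t₀ ≤ t → |h t| ≤ κ)
    (hinit : z ≤ a t₀ * β t₀) :
    ∀ t : ℝ, t₀ + (max z (2 * κ))⁻¹ ≤ t →
      |z - a t * β t| ≤ 2 * max z (2 * κ) := by
  intro t ht
  set m := max z (2 * κ)
  have hκm : 2 * κ ≤ m := le_max_right _ _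
  have hm : 0 < m := by linarith
  have hθ := fun t (ht : t ∈ Ici (0 : ℝ)) => hasDerivWithinAt_mul_of_twoLayer hode ht
  have hP : ∀ t ∈ Ici (0 : ℝ), 0 < a t ^ 2 + β t ^ 2 := fun t ht => by
    have := sq_sub_sq_eq_of_twoLayer hode ht
    rw [ha0, hβ0, Real.sq_sqrt hlam.le] at this
    nlinarith [sq_nonneg (β t)]
  obtain ⟨t₁, ht₁, hθt₁⟩ := exists_le_add_of_relaxation hθ ht₀ hhb hz hm hκm
    fun t _ => by linarith [two_mul_le_add_sq (a t) (β t)]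
  have hlower := ge_of_relaxation_of_ge (c := z - 2 * κ) hθ ht₀ hhb
    (fun t ht => hP t (ht₀.trans ht)) (by linarith) (by linarith)
  have hupper := le_of_relaxation_of_le hθ (ht₀.trans ht₁.1)
    (fun t ht => hhb t (ht₁.1.trans ht)) (fun t ht => hP t (ht₀.trans (ht₁.1.trans ht)))
    hθt₁ (by linarith)
  rw [abs_le]
  constructor
  · linarith [hupper t (ht₁.2.trans ht)]
  · linarith [hlower t (by linarith [inv_pos.2 hm] : t₀ ≤ t)]

/-- Approaching from above for the perturbed two-layer dynamics. -/
theorem stmt_3 (lam z κ t₀ : ℝ) (h a β : ℝ → ℝ)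
    (hlam : 0 < lam) (hh : ContinuousOn h (Ici 0))
    (ha0 : a 0 = Real.sqrt lam) (hβ0 : β 0 = 0)
    (hode : ∀ t ∈ Ici (0 : ℝ),
      HasDerivWithinAt β (a t * (z - a t * β t + h t)) (Ici 0) t ∧
      HasDerivWithinAt a (β t * (z - a t * β t + h t)) (Ici 0) t)
    (hz : 0 ≤ z) (ht₀ : 0 ≤ t₀) (hκ : 0 < κ)
    (hhb : ∀ t, t₀ ≤ t → |h t| ≤ κ)
    (hinit : z ≤ a t₀ * β t₀) :
    ∀ t : ℝ, t₀ + (max z (2 * κ))⁻¹ ≤ t →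
      |z - a t * β t| ≤ 2 * max z (2 * κ) :=
  stmt_3_general lam z κ t₀ h a β hlam ha0 hβ0 hode hz ht₀ hκ hhb hinit
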